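/- arXiv:2507.10944 — 4 statements merged into one kernel-verified Lean document; each statement's English description precedes it below -/
import Mathlib

section
/- Let W be a symmetric p x p real matrix, Gamma a nonsingular p x p real matrix, L > 0 and rho_n > 0 with ||W Gamma - I_p||_max <= rho_n, ||W - Gamma^{-1}||_max <= rho_n, and ||Gamma||_1 <= L. Let G_hat be any minimizer of sum_{j=1}^p ||G_{.j}||_1 over all p x p matrices G satisfying ||W G - I_p||_max <= rho_n, and let Gamma_hat be the symmetrization Gamma_hat_{ij} = G_hat_{ij} if |G_hat_{ij}| <= |G_hat_{ji}| and Gamma_hat_{ij} = G_hat_{ji} otherwise. Then for every j = 1,...,p: ||Gamma_hat_{.j} - Gamma_{.j}||_1 <= (4L + 4L^2) * ||Gamma_{.j}||_0 * rho_n and ||Gamma_hat_{.j} - Gamma_{.j}||_2^2 <= (4L + 4L^2)(2L + 2L^2) * ||Gamma_{.j}||_0 * rho_n^2. -/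
open MeasureTheory ProbabilityTheory Real Finset
open scoped Classical ENNReal

noncomputable section

/-- Number of nonzero entries of a vector (the "ℓ0 norm"). -/
def nnz {ι : Type*} (v : ι → ℝ) : ℕ := (Function.support v).ncard

/-- ℓ¹ norm of a finitely supported vector. -/
def l1 {ι : Type*} [Fintype ι] (v : ι → ℝ) : ℝ := ∑ i, |v i|

/-- ℓ² norm. -/
def l2 {ι : Type*} [Fintype ι] (v : ι → ℝ) : ℝ := Real.sqrt (∑ i, (v i) ^ 2)

/-- ℓ∞ norm. -/
def linf {ι : Type*} [Fintype ι] (v : ι → ℝ) : ℝ := ⨆ i, |v i|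

/-- Euclidean inner product. -/
def dot {ι : Type*} [Fintype ι] (u v : ι → ℝ) : ℝ := ∑ i, u i * v i

/-- Entrywise max norm of a matrix. -/
def matMax {ι κ : Type*} [Fintype ι] [Fintype κ] (A : Matrix ι κ ℝ) : ℝ :=
  ⨆ i, ⨆ j, |A i j|

/-- Matrix ℓ¹ operator norm: maximum column absolute sum. -/
def matL1 {ι κ : Type*} [Fintype ι] [Fintype κ] (A : Matrix ι κ ℝ) : ℝ :=
  ⨆ j, ∑ i, |A i j|

/-- Matrix ℓ² operator (spectral) norm. -/
def matL2 {ι κ : Type*} [Fintype ι] [Fintype κ] (A : Matrix ι κ ℝ) : ℝ :=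
  sInf {c | 0 ≤ c ∧ ∀ v : κ → ℝ, l2 (A.mulVec v) ≤ c * l2 v}

/-- Entrywise ℓ¹ norm of a matrix. -/
def matE1 {ι κ : Type*} [Fintype ι] [Fintype κ] (A : Matrix ι κ ℝ) : ℝ :=
  ∑ i, ∑ j, |A i j|

/-- Principal submatrix with rows and columns indexed by `S`. -/
def subSq {p : ℕ} (A : Matrix (Fin p) (Fin p) ℝ) (S : Set (Fin p)) : Matrix S S ℝ :=
  A.submatrix (fun i => (i : Fin p)) (fun j => (j : Fin p))

/-- Sub-gaussian real random variable with (sub-gaussian) norm at most `σ`: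
`E[exp(z²/σ²)] ≤ 2`. -/
def SubG {Ω : Type*} [MeasurableSpace Ω] (μ : Measure Ω) (z : Ω → ℝ) (σ : ℝ) : Prop :=
  ∫ ω, Real.exp ((z ω) ^ 2 / σ ^ 2) ∂μ ≤ 2

/-- Sub-gaussian random vector with norm at most `σ`. -/
def SubGVec {Ω : Type*} [MeasurableSpace Ω] {ι : Type*} [Fintype ι]
    (μ : Measure Ω) (Z : Ω → ι → ℝ) (σ : ℝ) : Prop :=
  ∀ u : ι → ℝ, SubG μ (fun ω => dot u (Z ω)) (σ * l2 u)


/-- The product `σ`-algebra on matrices. -/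
instance matrixMeasurableSpace {m n α : Type*} [MeasurableSpace α] :
    MeasurableSpace (Matrix m n α) :=
  (inferInstance : MeasurableSpace (m → n → α))
section Helpers

lemma sum_mul_bound' {ι : Type*} [Fintype ι] (u v : ι → ℝ) (c : ℝ)
    (h : ∀ i, |v i| ≤ c) : |∑ i, u i * v i| ≤ (∑ i, |u i|) * c := by
  calc |∑ i, u i * v i| ≤ ∑ i, |u i| * |v i| := by
        simpa [abs_mul] using Finset.abs_sum_le_sum_abs (fun i => u i * v i) Finset.univ
    _ ≤ ∑ i, |u i| * c :=
        Finset.sum_le_sum fun i _ => mul_le_mul_of_nonneg_left (h i) (abs_nonneg _)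
    _ = _ := by rw [← Finset.sum_mul]

lemma abs_le_matMax' {ι κ : Type*} [Fintype ι] [Fintype κ] (A : Matrix ι κ ℝ) (i : ι) (j : κ) :
    |A i j| ≤ matMax A :=
  le_trans (le_ciSup (f := fun j => |A i j|) (Set.Finite.bddAbove (Set.finite_range _)) j)
    (le_ciSup (f := fun i => ⨆ j, |A i j|) (Set.Finite.bddAbove (Set.finite_range _)) i)

end Helpers

open Matrix in
/-- Lemma S1 of Liang–Tan: deterministic error bounds for the
symmetrized CLIME-type estimator.  If `W` is symmetric, `Γ` is nonsingular with
`‖WΓ - I‖_max ≤ ρₙ`, `‖W - Γ⁻¹‖_max ≤ ρₙ` and `‖Γ‖₁ ≤ L`, and `Γhat` is the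
symmetrization of a minimizer `Ghat` of the column-wise ℓ¹ objective over the
feasible set `‖WG - I‖_max ≤ ρₙ`, then every column of `Γhat - Γ` obeys the stated
ℓ¹ and squared-ℓ² bounds. -/
theorem stmt10 {p : ℕ} (W Γ : Matrix (Fin p) (Fin p) ℝ) (L ρn : ℝ)
    (hW : W.IsSymm) (hΓ : IsUnit Γ.det)
    (hL : 0 < L) (hρn : 0 < ρn)
    (h1 : matMax (W * Γ - 1) ≤ ρn)
    (h2 : matMax (W - Γ⁻¹) ≤ ρn)
    (h3 : matL1 Γ ≤ L)
    (Ghat : Matrix (Fin p) (Fin p) ℝ)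
    (hfeas : matMax (W * Ghat - 1) ≤ ρn)
    (hmin : ∀ G : Matrix (Fin p) (Fin p) ℝ, matMax (W * G - 1) ≤ ρn →
      ∑ j, l1 (fun i => Ghat i j) ≤ ∑ j, l1 (fun i => G i j))
    (Γhat : Matrix (Fin p) (Fin p) ℝ)
    (hsymm : ∀ i j, Γhat i j = if |Ghat i j| ≤ |Ghat j i| then Ghat i j else Ghat j i) :
    ∀ j, l1 (fun i => Γhat i j - Γ i j)
        ≤ (4 * L + 4 * L ^ 2) * (nnz (fun i => Γ i j) : ℝ) * ρn ∧
      l2 (fun i => Γhat i j - Γ i j) ^ 2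
        ≤ (4 * L + 4 * L ^ 2) * (2 * L + 2 * L ^ 2) * (nnz (fun i => Γ i j) : ℝ) * ρn ^ 2 := by
  intro j
  have hL0 : (0:ℝ) ≤ L := hL.le
  -- entrywise consequences of the max-norm hypotheses
  have hWGhat : ∀ a b, |(W * Ghat - 1) a b| ≤ ρn := fun a b => (abs_le_matMax' _ a b).trans hfeas
  have hWΓ : ∀ a b, |(W * Γ - 1) a b| ≤ ρn := fun a b => (abs_le_matMax' _ a b).trans h1
  have hWI : ∀ a b, |(W - Γ⁻¹) a b| ≤ ρn := fun a b => (abs_le_matMax' _ a b).trans h2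
  have hColΓ : ∀ b, ∑ i, |Γ i b| ≤ L := fun b =>
    (le_ciSup (f := fun b => ∑ i, |Γ i b|)
      (Set.Finite.bddAbove (Set.finite_range _)) b).trans h3
  have hΓW : ∀ a b, |(Γᵀ * W - 1) a b| ≤ ρn := by
    intro a b
    have he : (Γᵀ * W - 1) a b = (W * Γ - 1) b a := by
      simp only [Matrix.sub_apply, Matrix.mul_apply, Matrix.transpose_apply]
      congr 1
      · exact Finset.sum_congr rfl fun k _ => by rw [← hW.apply b k]; ring
      · simp [Matrix.one_apply, eq_comm]
    rw [he]; exact hWΓ b a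
  -- column-wise minimality
  have hcolmin : ∀ b, ∑ i, |Ghat i b| ≤ ∑ i, |Γ i b| := by
    intro b
    set G : Matrix (Fin p) (Fin p) ℝ :=
      Matrix.of (fun i k => if k = b then Γ i k else Ghat i k) with hG
    have hfeasG : matMax (W * G - 1) ≤ ρn := by
      refine Real.iSup_le (fun a => Real.iSup_le (fun c => ?_) hρn.le) hρn.le
      have hent : (W * G - 1) a c
          = if c = b then (W * Γ - 1) a c else (W * Ghat - 1) a c := by
        by_cases h : c = b <;>
          simp [Matrix.sub_apply, Matrix.mul_apply, hG, h]
      rw [hent]; split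
      · exact hWΓ a c
      · exact hWGhat a c
    have hm := hmin G hfeasG
    have e1 : ∀ (M : Matrix (Fin p) (Fin p) ℝ), ∑ k, l1 (fun i => M i k)
        = l1 (fun i => M i b) + ∑ k ∈ Finset.univ.erase b, l1 (fun i => M i k) :=
      fun M => (Finset.add_sum_erase Finset.univ _ (Finset.mem_univ b)).symm
    rw [e1 Ghat, e1 G] at hm
    have e2 : ∑ k ∈ Finset.univ.erase b, l1 (fun i => G i k)
        = ∑ k ∈ Finset.univ.erase b, l1 (fun i => Ghat i k) :=
      Finset.sum_congr rfl fun k hk => by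
        simp [l1, hG, (Finset.mem_erase.mp hk).1]
    rw [e2] at hm
    have hm' := le_of_add_le_add_right hm
    have e3 : l1 (fun i => G i b) = ∑ i, |Γ i b| := by simp [l1, hG]
    rw [e3] at hm'
    simpa [l1] using hm'
  -- asymmetry of Γ⁻¹
  have hAsymInv : ∀ a b, |Γ⁻¹ b a - Γ⁻¹ a b| ≤ 2 * ρn := by
    intro a b
    have he : Γ⁻¹ b a - Γ⁻¹ a b = (W - Γ⁻¹) a b - (W - Γ⁻¹) b a := by
      have hw : W b a = W a b := hW.apply a b
      simp only [Matrix.sub_apply]; linarith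
    rw [he]
    calc |(W - Γ⁻¹) a b - (W - Γ⁻¹) b a| ≤ |(W - Γ⁻¹) a b| + |(W - Γ⁻¹) b a| :=
          abs_sub _ _
      _ ≤ 2 * ρn := by linarith [hWI a b, hWI b a]
  -- asymmetry of Γ
  have hAsymΓ : ∀ a b, |Γ a b - Γ b a| ≤ 2 * L ^ 2 * ρn := by
    have hinv : Γ⁻¹ * Γ = 1 := Matrix.nonsing_inv_mul Γ hΓ
    have hid : Γ - Γᵀ = Γᵀ * (Γ⁻¹ᵀ - Γ⁻¹) * Γ := by
      have h' : Γᵀ * (Γ⁻¹ᵀ - Γ⁻¹) * Γ = (Γ⁻¹ * Γ)ᵀ * Γ - Γᵀ * (Γ⁻¹ * Γ) := by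
        rw [Matrix.transpose_mul]; noncomm_ring
      rw [h', hinv, Matrix.transpose_one, one_mul, mul_one]
    intro a b
    have e := congrFun (congrFun hid a) b
    simp only [Matrix.sub_apply, Matrix.transpose_apply, Matrix.mul_apply] at e
    rw [e]
    have e2 : ∑ l, (∑ k, Γ k a * (Γ⁻¹ l k - Γ⁻¹ k l)) * Γ l b
        = ∑ l, Γ l b * (∑ k, Γ k a * (Γ⁻¹ l k - Γ⁻¹ k l)) :=
      Finset.sum_congr rfl fun l _ => by ring
    rw [e2]
    have hin : ∀ l, |∑ k, Γ k a * (Γ⁻¹ l k - Γ⁻¹ k l)| ≤ L * (2 * ρn) := by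
      intro l
      refine (sum_mul_bound' (fun k => Γ k a) (fun k => Γ⁻¹ l k - Γ⁻¹ k l) (2 * ρn)
        (fun k => hAsymInv k l)).trans ?_
      exact mul_le_mul_of_nonneg_right (hColΓ a) (by positivity)
    refine (sum_mul_bound' (fun l => Γ l b) _ (L * (2 * ρn)) hin).trans ?_
    have := mul_le_mul_of_nonneg_right (hColΓ b) (show (0:ℝ) ≤ L * (2 * ρn) by positivity)
    nlinarith
  -- key max-norm bound: Ghat vs Γᵀ
  have hGhatT : ∀ a b, |Ghat a b - Γ b a| ≤ 2 * L * ρn := by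
    have hid : Ghat - Γᵀ = (1 - Γᵀ * W) * Ghat + Γᵀ * (W * Ghat - 1) := by noncomm_ring
    intro a b
    have e := congrFun (congrFun hid a) b
    simp only [Matrix.sub_apply, Matrix.add_apply, Matrix.transpose_apply] at e
    rw [e]
    have b1 : |((1 - Γᵀ * W) * Ghat) a b| ≤ L * ρn := by
      have e1 : ((1 - Γᵀ * W) * Ghat) a b = ∑ k, Ghat k b * (1 - Γᵀ * W) a k := by
        simp only [Matrix.mul_apply]
        exact Finset.sum_congr rfl fun k _ => by ring
      rw [e1]
      refine (sum_mul_bound' (fun k => Ghat k b) (fun k => (1 - Γᵀ * W) a k) ρn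
        (fun k => ?_)).trans
        (mul_le_mul_of_nonneg_right ((hcolmin b).trans (hColΓ b)) hρn.le)
      show |(1 - Γᵀ * W) a k| ≤ ρn
      have he2 : (1 - Γᵀ * W) a k = -((Γᵀ * W - 1) a k) := by
        simp only [Matrix.sub_apply]; ring
      rw [he2, abs_neg]; exact hΓW a k
    have b2 : |(Γᵀ * (W * Ghat - 1)) a b| ≤ L * ρn := by
      have e1 : (Γᵀ * (W * Ghat - 1)) a b = ∑ k, Γ k a * (W * Ghat - 1) k b := by
        simp only [Matrix.mul_apply, Matrix.transpose_apply]
      rw [e1]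
      exact (sum_mul_bound' _ _ ρn (fun k => hWGhat k b)).trans
        (mul_le_mul_of_nonneg_right (hColΓ a) hρn.le)
    calc |((1 - Γᵀ * W) * Ghat) a b + (Γᵀ * (W * Ghat - 1)) a b|
        ≤ |((1 - Γᵀ * W) * Ghat) a b| + |(Γᵀ * (W * Ghat - 1)) a b| := abs_add_le _ _
      _ ≤ 2 * L * ρn := by linarith
  have hGhatΓ : ∀ a b, |Ghat a b - Γ a b| ≤ 2 * L * ρn + 2 * L ^ 2 * ρn := by
    intro a b
    calc |Ghat a b - Γ a b| ≤ |Ghat a b - Γ b a| + |Γ b a - Γ a b| := abs_sub_le _ _ _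
      _ ≤ 2 * L * ρn + 2 * L ^ 2 * ρn := add_le_add (hGhatT a b) (hAsymΓ b a)
  have hΓhatΓ : ∀ a b, |Γhat a b - Γ a b| ≤ 2 * L * ρn + 2 * L ^ 2 * ρn := by
    intro a b
    rw [hsymm a b]; split
    · exact hGhatΓ a b
    · refine (hGhatT b a).trans ?_
      have : (0:ℝ) ≤ 2 * L ^ 2 * ρn := by positivity
      linarith
  have hΓhatG : ∀ a b, |Γhat a b| ≤ |Ghat a b| := by
    intro a b
    rw [hsymm a b]; split
    · exact le_rfl
    · next h => exact (not_le.mp h).le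
  -- support set
  set T : Finset (Fin p) := Finset.univ.filter (fun i => Γ i j ≠ 0) with hT
  have hnnz : (nnz (fun i => Γ i j) : ℝ) = (T.card : ℝ) := by
    have hsup : Function.support (fun i => Γ i j) = ↑T := by
      ext i; simp [Function.mem_support, hT]
    rw [nnz, hsup, Set.ncard_coe_finset]
  set M : ℝ := 2 * L * ρn + 2 * L ^ 2 * ρn with hM
  have hM0 : 0 ≤ M := by rw [hM]; positivity
  have hsumT : ∑ i ∈ T, |Γhat i j - Γ i j| ≤ T.card * M := by
    calc ∑ i ∈ T, |Γhat i j - Γ i j| ≤ ∑ _i ∈ T, M :=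
          Finset.sum_le_sum fun i _ => hΓhatΓ i j
      _ = T.card * M := by rw [Finset.sum_const, nsmul_eq_mul]
  have hsumTG : ∑ i ∈ T, |Ghat i j - Γ i j| ≤ T.card * M := by
    calc ∑ i ∈ T, |Ghat i j - Γ i j| ≤ ∑ _i ∈ T, M :=
          Finset.sum_le_sum fun i _ => hGhatΓ i j
      _ = T.card * M := by rw [Finset.sum_const, nsmul_eq_mul]
  have hΓT : ∑ i, |Γ i j| = ∑ i ∈ T, |Γ i j| := by
    rw [← Finset.sum_filter_add_sum_filter_not Finset.univ (fun i => Γ i j ≠ 0)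
      (fun i => |Γ i j|)]
    have hz : ∑ i ∈ Finset.univ.filter (fun i => ¬ Γ i j ≠ 0), |Γ i j| = 0 :=
      Finset.sum_eq_zero fun i hi => by
        simp only [Finset.mem_filter, not_not] at hi; simp [hi.2]
    rw [hz, add_zero]
  have hbasic : ∑ i ∈ Finset.univ.filter (fun i => ¬ Γ i j ≠ 0), |Ghat i j|
      ≤ ∑ i ∈ T, |Ghat i j - Γ i j| := by
    have h0 := hcolmin j
    rw [hΓT, ← Finset.sum_filter_add_sum_filter_not Finset.univ (fun i => Γ i j ≠ 0)
      (fun i => |Ghat i j|)] at h0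
    have h1 : ∑ i ∈ T, |Γ i j| - ∑ i ∈ T, |Ghat i j| ≤ ∑ i ∈ T, |Ghat i j - Γ i j| := by
      rw [← Finset.sum_sub_distrib]
      refine Finset.sum_le_sum fun i _ => ?_
      have h2 := abs_sub_abs_le_abs_sub (Γ i j) (Ghat i j)
      rw [abs_sub_comm] at h2
      linarith
    linarith
  have hl1 : l1 (fun i => Γhat i j - Γ i j) ≤ 2 * (T.card * M) := by
    rw [l1, ← Finset.sum_filter_add_sum_filter_not Finset.univ (fun i => Γ i j ≠ 0)
      (fun i => |Γhat i j - Γ i j|)]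
    have hc : ∑ i ∈ Finset.univ.filter (fun i => ¬ Γ i j ≠ 0), |Γhat i j - Γ i j|
        ≤ T.card * M := by
      calc ∑ i ∈ Finset.univ.filter (fun i => ¬ Γ i j ≠ 0), |Γhat i j - Γ i j|
          ≤ ∑ i ∈ Finset.univ.filter (fun i => ¬ Γ i j ≠ 0), |Ghat i j| := by
            refine Finset.sum_le_sum fun i hi => ?_
            simp only [Finset.mem_filter, not_not] at hi
            rw [hi.2, sub_zero]; exact hΓhatG i j
        _ ≤ ∑ i ∈ T, |Ghat i j - Γ i j| := hbasic
        _ ≤ T.card * M := hsumTG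
    linarith
  constructor
  · refine hl1.trans ?_
    rw [hnnz, hM]; ring_nf; exact le_of_eq (by ring)
  · have hl2 : l2 (fun i => Γhat i j - Γ i j) ^ 2 = ∑ i, (Γhat i j - Γ i j) ^ 2 :=
      Real.sq_sqrt (Finset.sum_nonneg fun i _ => sq_nonneg _)
    rw [hl2]
    have hstep : ∑ i, (Γhat i j - Γ i j) ^ 2 ≤ M * l1 (fun i => Γhat i j - Γ i j) := by
      rw [l1, Finset.mul_sum]
      refine Finset.sum_le_sum fun i _ => ?_
      have h2 := hΓhatΓ i j
      nlinarith [abs_nonneg (Γhat i j - Γ i j), sq_abs (Γhat i j - Γ i j)]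
    refine hstep.trans ?_
    refine (mul_le_mul_of_nonneg_left hl1 hM0).trans ?_
    rw [hnnz, hM]; ring_nf; exact le_of_eq (by ring)
end
end

section
/- Let W and Sigma be symmetric p x p real matrices with b^T Sigma b >= ||b||_2^2 / C4 for all b in R^p (i.e., lambda_min(Sigma) >= 1/C4), and suppose ||W - Sigma||_max <= lambda_bar for some lambda_bar > 0. Let S be a subset of {1,...,p}, eta0 > 1, and suppose delta := C4 * |S| * lambda_bar * (1 + eta0)^2 <= 1. Then for every b in R^p satisfying the cone condition sum_{j not in S} |b_j| <= eta0 * sum_{j in S} |b_j|, one has (1/C4) * (1 - delta) * (sum_{j in S} |b_j|)^2 <= |S| * (b^T W b). -/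
open MeasureTheory ProbabilityTheory Real Finset
open scoped Classical ENNReal

noncomputable section

/-- Lemma S3/S5 of Liang–Tan: deterministic perturbation lemma
establishing the compatibility condition.  If `λ_min(Σ) ≥ 1/C₄` (expressed through the
quadratic form), `‖W - Σ‖_max ≤ λ̄` and `δ := C₄ |S| λ̄ (1+η₀)² ≤ 1`, then every vector
in the cone `∑_{j∉S}|b_j| ≤ η₀ ∑_{j∈S}|b_j|` satisfies
`(1/C₄)(1-δ)(∑_{j∈S}|b_j|)² ≤ |S| bᵀWb`. -/
theorem stmt12 {p : ℕ} (W Sig : Matrix (Fin p) (Fin p) ℝ) (C4 lamBar η0 : ℝ)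
    (S : Finset (Fin p))
    (hWs : W.IsSymm) (hSs : Sig.IsSymm)
    (hC4 : 0 < C4) (hlam : 0 < lamBar) (hη0 : 1 < η0)
    (hSmin : ∀ b : Fin p → ℝ, (∑ i, b i ^ 2) / C4 ≤ dot b (Sig.mulVec b))
    (hclose : matMax (W - Sig) ≤ lamBar)
    (hδ : C4 * S.card * lamBar * (1 + η0) ^ 2 ≤ 1) :
    ∀ b : Fin p → ℝ, (∑ j ∈ Sᶜ, |b j|) ≤ η0 * ∑ j ∈ S, |b j| →
      (1 / C4) * (1 - C4 * S.card * lamBar * (1 + η0) ^ 2) * (∑ j ∈ S, |b j|) ^ 2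
        ≤ S.card * dot b (W.mulVec b) := by
  intro b hb
  set s := ∑ j ∈ S, |b j| with hsdef
  have hs0 : 0 ≤ s := Finset.sum_nonneg fun _ _ => abs_nonneg _
  set A := W - Sig with hAdef
  -- entrywise bound on A
  have hA : ∀ i j, |A i j| ≤ lamBar := by
    intro i j
    refine le_trans ?_ hclose
    unfold matMax
    calc |A i j| ≤ ⨆ j', |A i j'| :=
        le_ciSup (f := fun j' => |A i j'|) (Set.Finite.bddAbove (Set.finite_range _)) j
      _ ≤ ⨆ i', ⨆ j', |A i' j'| :=
        le_ciSup (f := fun i' => ⨆ j', |A i' j'|) (Set.Finite.bddAbove (Set.finite_range _)) i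
  -- l1 bound via cone
  have hl1 : ∑ j, |b j| ≤ (1 + η0) * s := by
    have := Finset.sum_add_sum_compl S (fun j => |b j|)
    linarith
  have hl1nn : (0:ℝ) ≤ ∑ j, |b j| := Finset.sum_nonneg fun _ _ => abs_nonneg _
  -- quadratic form of A bounded
  have habs : |dot b (A.mulVec b)| ≤ lamBar * (∑ j, |b j|) ^ 2 := by
    have h1 : |dot b (A.mulVec b)| ≤ ∑ i, ∑ j, |b i| * (|A i j| * |b j|) := by
      unfold dot Matrix.mulVec dotProduct
      calc |∑ i, b i * ∑ j, A i j * b j|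
          ≤ ∑ i, |b i * ∑ j, A i j * b j| := Finset.abs_sum_le_sum_abs _ _
        _ ≤ ∑ i, ∑ j, |b i| * (|A i j| * |b j|) := by
            refine Finset.sum_le_sum fun i _ => ?_
            rw [abs_mul, ← Finset.mul_sum]
            refine mul_le_mul_of_nonneg_left ?_ (abs_nonneg _)
            calc |∑ j, A i j * b j| ≤ ∑ j, |A i j * b j| := Finset.abs_sum_le_sum_abs _ _
              _ = ∑ j, |A i j| * |b j| := by simp [abs_mul]
    refine h1.trans ?_
    have h2 : ∑ i, ∑ j, |b i| * (|A i j| * |b j|) ≤ ∑ i, ∑ j, |b i| * (lamBar * |b j|) := by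
      refine Finset.sum_le_sum fun i _ => Finset.sum_le_sum fun j _ => ?_
      exact mul_le_mul_of_nonneg_left
        (mul_le_mul_of_nonneg_right (hA i j) (abs_nonneg _)) (abs_nonneg _)
    refine h2.trans (le_of_eq ?_)
    rw [sq, Finset.sum_mul_sum, Finset.mul_sum]
    refine Finset.sum_congr rfl fun i _ => ?_
    rw [Finset.mul_sum]
    exact Finset.sum_congr rfl fun j _ => by ring
  -- split W = Sig + A
  have hsplit : dot b (W.mulVec b) = dot b (Sig.mulVec b) + dot b (A.mulVec b) := by
    unfold dot
    rw [← Finset.sum_add_distrib]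
    refine Finset.sum_congr rfl fun i _ => ?_
    have : A.mulVec b i = W.mulVec b i - Sig.mulVec b i := by
      rw [hAdef, Matrix.sub_mulVec]; rfl
    rw [this]; ring
  -- Cauchy–Schwarz
  have hCS : s ^ 2 ≤ (S.card : ℝ) * ∑ j ∈ S, b j ^ 2 := by
    have := sq_sum_le_card_mul_sum_sq (s := S) (f := fun j => |b j|)
    simpa [sq_abs] using this
  have hT : ∑ j ∈ S, b j ^ 2 ≤ ∑ j, b j ^ 2 :=
    Finset.sum_le_sum_of_subset_of_nonneg (Finset.subset_univ S)
      (fun _ _ _ => sq_nonneg _)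
  have hn : (0:ℝ) ≤ (S.card : ℝ) := Nat.cast_nonneg _
  have hl1sq : (∑ j, |b j|) ^ 2 ≤ (1 + η0) ^ 2 * s ^ 2 := by
    have := pow_le_pow_left₀ hl1nn hl1 2
    calc (∑ j, |b j|) ^ 2 ≤ ((1 + η0) * s) ^ 2 := this
      _ = (1 + η0) ^ 2 * s ^ 2 := by ring
  have hQS : (∑ j, b j ^ 2) / C4 ≤ dot b (Sig.mulVec b) := hSmin b
  have hQA : -(lamBar * ((1 + η0) ^ 2 * s ^ 2)) ≤ dot b (A.mulVec b) := by
    have h1 : -(lamBar * (∑ j, |b j|) ^ 2) ≤ dot b (A.mulVec b) := by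
      have := neg_abs_le (dot b (A.mulVec b))
      linarith
    have h2 : lamBar * (∑ j, |b j|) ^ 2 ≤ lamBar * ((1 + η0) ^ 2 * s ^ 2) :=
      mul_le_mul_of_nonneg_left hl1sq hlam.le
    linarith
  -- combine
  have key1 : s ^ 2 / C4 ≤ (S.card : ℝ) * dot b (Sig.mulVec b) := by
    have h1 : s ^ 2 ≤ (S.card : ℝ) * ∑ j, b j ^ 2 :=
      hCS.trans (mul_le_mul_of_nonneg_left hT hn)
    have h2 : s ^ 2 / C4 ≤ ((S.card : ℝ) * ∑ j, b j ^ 2) / C4 :=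
      by gcongr
    have h3 : ((S.card : ℝ) * ∑ j, b j ^ 2) / C4 = (S.card : ℝ) * ((∑ j, b j ^ 2) / C4) := by
      ring
    have h4 := mul_le_mul_of_nonneg_left hQS hn
    linarith
  have key2 : -((S.card : ℝ) * (lamBar * ((1 + η0) ^ 2 * s ^ 2)))
      ≤ (S.card : ℝ) * dot b (A.mulVec b) := by
    have := mul_le_mul_of_nonneg_left hQA hn
    linarith
  have expand : (1 / C4) * (1 - C4 * S.card * lamBar * (1 + η0) ^ 2) * s ^ 2
      = s ^ 2 / C4 - (S.card : ℝ) * (lamBar * ((1 + η0) ^ 2 * s ^ 2)) := by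
    field_simp
  rw [hsplit, mul_add, expand]
  linarith
end
end

section
/- Let X, Y and Z be real random variables on a probability space and a, b, c > 0 with E[exp(X^2/a^2)] <= 2, E[exp(Y^2/b^2)] <= 2 and E[exp(Z^2/c^2)] <= 2. Then E[exp((|XYZ|/(a*b*c))^{2/3})] <= 2. In particular, the psi_{2/3}-norm of XYZ is at most the product of the psi_2-norms (sub-gaussian norms) of X, Y and Z. -/
open MeasureTheory ProbabilityTheory Real Finset
open scoped Classical ENNReal

noncomputable section

private lemma key_ineq {x y z a b c : ℝ} (ha : 0 < a) (hb : 0 < b) (hc : 0 < c) :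
    (|x * y * z| / (a * b * c)) ^ ((2:ℝ)/3)
      ≤ 1/3 * (x ^ 2 / a ^ 2) + 1/3 * (y ^ 2 / b ^ 2) + 1/3 * (z ^ 2 / c ^ 2) := by
  have hp1 : (0:ℝ) ≤ x ^ 2 / a ^ 2 := by positivity
  have hp2 : (0:ℝ) ≤ y ^ 2 / b ^ 2 := by positivity
  have hp3 : (0:ℝ) ≤ z ^ 2 / c ^ 2 := by positivity
  have h := Real.geom_mean_le_arith_mean3_weighted (by norm_num : (0:ℝ) ≤ 1/3)
    (by norm_num : (0:ℝ) ≤ 1/3) (by norm_num : (0:ℝ) ≤ 1/3) hp1 hp2 hp3 (by norm_num)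
  have heq : (|x * y * z| / (a * b * c)) ^ ((2:ℝ)/3)
      = (x ^ 2 / a ^ 2) ^ ((1:ℝ)/3) * (y ^ 2 / b ^ 2) ^ ((1:ℝ)/3) * (z ^ 2 / c ^ 2) ^ ((1:ℝ)/3) := by
    have h1 : |x * y * z| / (a * b * c) = (|x| / a) * (|y| / b) * (|z| / c) := by
      rw [abs_mul, abs_mul]; field_simp
    have hx : (0:ℝ) ≤ |x| / a := by positivity
    have hy : (0:ℝ) ≤ |y| / b := by positivity
    have hz : (0:ℝ) ≤ |z| / c := by positivity
    rw [h1, Real.mul_rpow (by positivity) hz, Real.mul_rpow hx hy]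
    have key : ∀ (t s : ℝ), 0 < s → (|t| / s) ^ ((2:ℝ)/3) = (t ^ 2 / s ^ 2) ^ ((1:ℝ)/3) := by
      intro t s hs
      have h2 : t ^ 2 / s ^ 2 = (|t| / s) ^ (2:ℕ) := by
        rw [div_pow, sq_abs]
      rw [h2, ← Real.rpow_natCast (|t| / s) 2, ← Real.rpow_mul (by positivity)]
      norm_num
    rw [key x a ha, key y b hb, key z c hc]
  rw [heq]; exact h

/-- Lemma S11 of Liang–Tan: the product of three sub-gaussian random
variables is (2/3)-sub-exponential, with
`‖XYZ‖_{ψ_{2/3}} ≤ ‖X‖_{ψ₂} ‖Y‖_{ψ₂} ‖Z‖_{ψ₂}`.  Concretely, if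
`E[exp(X²/a²)] ≤ 2`, `E[exp(Y²/b²)] ≤ 2` and `E[exp(Z²/c²)] ≤ 2` then
`E[exp((|XYZ|/(abc))^{2/3})] ≤ 2`. -/
theorem stmt14 {Ω : Type*} [MeasurableSpace Ω] (μ : Measure Ω) [IsProbabilityMeasure μ]
    (X Y Z : Ω → ℝ) (a b c : ℝ) (ha : 0 < a) (hb : 0 < b) (hc : 0 < c)
    (hX : Measurable X) (hY : Measurable Y) (hZ : Measurable Z)
    (h1 : ∫⁻ ω, ENNReal.ofReal (Real.exp (X ω ^ 2 / a ^ 2)) ∂μ ≤ 2)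
    (h2 : ∫⁻ ω, ENNReal.ofReal (Real.exp (Y ω ^ 2 / b ^ 2)) ∂μ ≤ 2)
    (h3 : ∫⁻ ω, ENNReal.ofReal (Real.exp (Z ω ^ 2 / c ^ 2)) ∂μ ≤ 2) :
    ∫⁻ ω, ENNReal.ofReal (Real.exp ((|X ω * Y ω * Z ω| / (a * b * c)) ^ ((2:ℝ)/3))) ∂μ
      ≤ 2 := by
  set f : Fin 3 → Ω → ℝ≥0∞ := ![fun ω => ENNReal.ofReal (Real.exp (X ω ^ 2 / a ^ 2)),
    fun ω => ENNReal.ofReal (Real.exp (Y ω ^ 2 / b ^ 2)),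
    fun ω => ENNReal.ofReal (Real.exp (Z ω ^ 2 / c ^ 2))] with hfdef
  have hmeas : ∀ i ∈ Finset.univ, AEMeasurable (f i) μ := by
    intro i _
    fin_cases i
    · exact (ENNReal.measurable_ofReal.comp ((measurable_exp.comp
        ((hX.pow_const 2).div_const _)))).aemeasurable
    · exact (ENNReal.measurable_ofReal.comp ((measurable_exp.comp
        ((hY.pow_const 2).div_const _)))).aemeasurable
    · exact (ENNReal.measurable_ofReal.comp ((measurable_exp.comp
        ((hZ.pow_const 2).div_const _)))).aemeasurable
  have hH := ENNReal.lintegral_prod_norm_pow_le Finset.univ hmeas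
    (p := fun _ => (1:ℝ)/3) (by norm_num) (fun i _ => by norm_num)
  have hpt : ∀ ω, ENNReal.ofReal (Real.exp ((|X ω * Y ω * Z ω| / (a * b * c)) ^ ((2:ℝ)/3)))
      ≤ ∏ i, f i ω ^ ((1:ℝ)/3) := by
    intro ω
    have hprod : ∏ i, f i ω ^ ((1:ℝ)/3)
        = ENNReal.ofReal (Real.exp (1/3 * (X ω ^ 2 / a ^ 2) + 1/3 * (Y ω ^ 2 / b ^ 2)
            + 1/3 * (Z ω ^ 2 / c ^ 2))) := by
      rw [Fin.prod_univ_three]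
      simp only [hfdef, Matrix.cons_val_zero, Matrix.cons_val_one, Matrix.head_cons,
        Matrix.cons_val_two, Matrix.tail_cons]
      rw [ENNReal.ofReal_rpow_of_pos (Real.exp_pos _),
        ENNReal.ofReal_rpow_of_pos (Real.exp_pos _),
        ENNReal.ofReal_rpow_of_pos (Real.exp_pos _),
        ← ENNReal.ofReal_mul (by positivity), ← ENNReal.ofReal_mul (by positivity)]
      congr 1
      rw [← Real.exp_mul, ← Real.exp_mul, ← Real.exp_mul, ← Real.exp_add, ← Real.exp_add]
      ring_nf
    rw [hprod]
    exact ENNReal.ofReal_le_ofReal (Real.exp_le_exp.2 (key_ineq ha hb hc))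
  calc ∫⁻ ω, ENNReal.ofReal (Real.exp ((|X ω * Y ω * Z ω| / (a * b * c)) ^ ((2:ℝ)/3))) ∂μ
      ≤ ∫⁻ ω, ∏ i, f i ω ^ ((1:ℝ)/3) ∂μ := lintegral_mono hpt
    _ ≤ ∏ i, (∫⁻ ω, f i ω ∂μ) ^ ((1:ℝ)/3) := hH
    _ ≤ 2 := by
        rw [Fin.prod_univ_three]
        have e1 : (∫⁻ ω, f 0 ω ∂μ) ^ ((1:ℝ)/3) ≤ (2:ℝ≥0∞) ^ ((1:ℝ)/3) :=
          ENNReal.rpow_le_rpow h1 (by norm_num)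
        have e2 : (∫⁻ ω, f 1 ω ∂μ) ^ ((1:ℝ)/3) ≤ (2:ℝ≥0∞) ^ ((1:ℝ)/3) :=
          ENNReal.rpow_le_rpow h2 (by norm_num)
        have e3 : (∫⁻ ω, f 2 ω ∂μ) ^ ((1:ℝ)/3) ≤ (2:ℝ≥0∞) ^ ((1:ℝ)/3) :=
          ENNReal.rpow_le_rpow h3 (by norm_num)
        calc (∫⁻ ω, f 0 ω ∂μ) ^ ((1:ℝ)/3) * (∫⁻ ω, f 1 ω ∂μ) ^ ((1:ℝ)/3)
              * (∫⁻ ω, f 2 ω ∂μ) ^ ((1:ℝ)/3)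
            ≤ (2:ℝ≥0∞) ^ ((1:ℝ)/3) * (2:ℝ≥0∞) ^ ((1:ℝ)/3) * (2:ℝ≥0∞) ^ ((1:ℝ)/3) :=
              mul_le_mul' (mul_le_mul' e1 e2) e3
          _ = 2 := by
              rw [← ENNReal.rpow_add _ _ (by norm_num) (by norm_num),
                ← ENNReal.rpow_add _ _ (by norm_num) (by norm_num)]
              norm_num
end
end

section
/- Let X0 = (W, Z) be a bounded random vector with W in R^k and Z in R^m, let Y0 be a {0,1}-valued random variable, and suppose: Z is independent of the pair (W, Y0); E[Z] = 0; and P(Y0 = 1 | X0) is a function of W only. Define the population logistic loss l(beta) = E[ -Y0 * X0^T beta + log(1 + exp(X0^T beta)) ] for beta in R^{k+m}. If beta_tilde in R^k is a minimizer of the restricted map b |-> l((b, 0)) over R^k, then the gradient of l vanishes at (beta_tilde, 0); consequently, since l is convex, beta_bar := (beta_tilde, 0) is a global minimizer of l over R^{k+m}, i.e., the target coefficient vector of the (misspecified) logistic regression is supported on the W-coordinates. -/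
/-!
The logistic loss `φ(y, t) = -y t + log (1 + eᵗ)` is convex in `t` with derivative `σ(t) - y`, so
the population risk is convex and, the covariates being bounded, may be differentiated under the
integral: its gradient at `β` is `E[(σ(X₀ᵀβ) - Y₀) X₀]`. At `(β̃, 0)` the `W`-block of this gradient
vanishes because `β̃` minimizes the restricted risk, and the `Z`-block is
`E[(σ(Wᵀβ̃) - Y₀) Z]`, which factorizes by the independence of `Z` and `(W, Y₀)` and vanishes
since `E[Z] = 0`. A convex function is minimized wherever its derivative vanishes.
-/

open MeasureTheory ProbabilityTheory Real Finset
open scoped Classical ENNReal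

noncomputable section

namespace Real

def logisticLoss (y t : ℝ) : ℝ := -y * t + log (1 + exp t)

lemma hasDerivAt_log_one_add_exp (t : ℝ) :
    HasDerivAt (fun t => log (1 + exp t)) (sigmoid t) t := by
  have h := ((hasDerivAt_exp t).const_add 1).log (by positivity)
  convert h using 1
  rw [sigmoid_def, exp_neg]
  field_simp
  ring

lemma hasDerivAt_logisticLoss (y t : ℝ) :
    HasDerivAt (logisticLoss y) (sigmoid t - y) t := by
  have h := ((hasDerivAt_id t).const_mul (-y)).add (hasDerivAt_log_one_add_exp t)
  rwa [mul_one, neg_add_eq_sub] at h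

lemma convexOn_logisticLoss (y : ℝ) : ConvexOn ℝ Set.univ (logisticLoss y) := by
  have hsoftplus : ConvexOn ℝ Set.univ fun t => log (1 + exp t) :=
    Monotone.convexOn_univ_of_deriv (fun t => (hasDerivAt_log_one_add_exp t).differentiableAt)
      (by rw [funext fun t => (hasDerivAt_log_one_add_exp t).deriv]; exact sigmoid_monotone)
  exact (LinearMap.mul ℝ ℝ (-y)).convexOn convex_univ |>.add hsoftplus

lemma continuous_logisticLoss : Continuous fun p : ℝ × ℝ => logisticLoss p.1 p.2 := by
  unfold logisticLoss
  fun_prop (disch := intro; positivity)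

lemma abs_logisticLoss_le {y t R : ℝ} (hy : y ∈ Set.Icc 0 1) (ht : |t| ≤ R) :
    |logisticLoss y t| ≤ R + log (1 + exp R) := by
  have hlog_nonneg : 0 ≤ log (1 + exp t) := log_nonneg (by linarith [exp_pos t])
  have hlog_le : log (1 + exp t) ≤ log (1 + exp R) :=
    log_le_log (by positivity) (by linarith [exp_le_exp.2 (le_of_abs_le ht)])
  have hyt : |-y * t| ≤ R := by
    rw [abs_mul, abs_neg, abs_of_nonneg hy.1]
    nlinarith [abs_nonneg t, hy.2]
  calc |logisticLoss y t| ≤ |-y * t| + |log (1 + exp t)| := abs_add_le _ _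
    _ ≤ R + log (1 + exp R) := by rw [abs_of_nonneg hlog_nonneg]; linarith

lemma abs_sigmoid_sub_le {y : ℝ} (hy : y ∈ Set.Icc 0 1) (t : ℝ) : |sigmoid t - y| ≤ 1 := by
  rw [abs_le]
  constructor <;> linarith [sigmoid_nonneg t, sigmoid_le_one t, hy.1, hy.2]

end Real

theorem ConvexOn.isMinOn_of_hasFDerivAt_eq_zero {E : Type*} [NormedAddCommGroup E]
    [NormedSpace ℝ E] {f : E → ℝ} {a : E} (hf : ConvexOn ℝ Set.univ f)
    (hfa : HasFDerivAt f (0 : E →L[ℝ] ℝ) a) : IsMinOn f Set.univ a := by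
  intro b _
  have hline : ConvexOn ℝ Set.univ (f ∘ AffineMap.lineMap (k := ℝ) a b) := hf.comp_affineMap _
  have hderiv : HasDerivAt (f ∘ AffineMap.lineMap (k := ℝ) a b) 0 0 := by
    have hfa' : HasFDerivAt f (0 : E →L[ℝ] ℝ) (AffineMap.lineMap a b (0 : ℝ)) := by
      rwa [AffineMap.lineMap_apply_zero]
    simpa using hfa'.comp_hasDerivAt (0 : ℝ) AffineMap.hasDerivAt_lineMap
  have hslope := hline.le_slope_of_hasDerivAt (Set.mem_univ 0) (Set.mem_univ 1) one_pos hderiv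
  simpa [slope_def_field] using hslope

section LogisticRisk

variable {Ω E : Type*} [MeasurableSpace Ω] {μ : Measure Ω} [NormedAddCommGroup E]
  [NormedSpace ℝ E] {X : Ω → E →L[ℝ] ℝ} {Y : Ω → ℝ} {C : ℝ}

/-- The covariate enters as the linear functional `β ↦ X₀ᵀβ` on the parameter space. -/
def logisticRisk (μ : Measure Ω) (X : Ω → E →L[ℝ] ℝ) (Y : Ω → ℝ) (β : E) : ℝ :=
  ∫ ω, logisticLoss (Y ω) (X ω β) ∂μ

def logisticRiskGrad (μ : Measure Ω) (X : Ω → E →L[ℝ] ℝ) (Y : Ω → ℝ) (β : E) : E →L[ℝ] ℝ :=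
  ∫ ω, (sigmoid (X ω β) - Y ω) • X ω ∂μ

lemma norm_sigmoid_sub_smul_le {F : Type*} [NormedAddCommGroup F] [NormedSpace ℝ F] {y : ℝ}
    {L : F} (hy : y ∈ Set.Icc 0 1) (hL : ‖L‖ ≤ C) (t : ℝ) : ‖(sigmoid t - y) • L‖ ≤ C := by
  rw [norm_smul, Real.norm_eq_abs]
  calc |sigmoid t - y| * ‖L‖ ≤ 1 * C :=
        mul_le_mul (abs_sigmoid_sub_le hy t) hL (norm_nonneg _) zero_le_one
    _ = C := one_mul C

lemma convexOn_logisticRisk (hint : ∀ β, Integrable (fun ω => logisticLoss (Y ω) (X ω β)) μ) :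
    ConvexOn ℝ Set.univ (logisticRisk μ X Y) := by
  refine ⟨convex_univ, fun β _ γ _ a b ha hb hab => ?_⟩
  calc logisticRisk μ X Y (a • β + b • γ)
      ≤ ∫ ω, (a * logisticLoss (Y ω) (X ω β) + b * logisticLoss (Y ω) (X ω γ)) ∂μ := by
        refine integral_mono (hint _) (((hint β).const_mul a).add ((hint γ).const_mul b))
          fun ω => ?_
        simpa only [map_add, map_smul, smul_eq_mul] using
          (convexOn_logisticLoss (Y ω)).2 (Set.mem_univ (X ω β)) (Set.mem_univ (X ω γ)) ha hb hab
    _ = a • logisticRisk μ X Y β + b • logisticRisk μ X Y γ := by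
        rw [integral_add ((hint β).const_mul a) ((hint γ).const_mul b), integral_const_mul,
          integral_const_mul]
        rfl

variable [IsFiniteMeasure μ]

lemma integrable_logisticLoss (hX : AEStronglyMeasurable X μ) (hY : AEStronglyMeasurable Y μ)
    (hXC : ∀ᵐ ω ∂μ, ‖X ω‖ ≤ C) (hY01 : ∀ᵐ ω ∂μ, Y ω ∈ Set.Icc 0 1) (β : E) :
    Integrable (fun ω => logisticLoss (Y ω) (X ω β)) μ := by
  refine .of_bound (continuous_logisticLoss.comp_aestronglyMeasurable
    (hY.prodMk (hX.apply_continuousLinearMap β))) (C * ‖β‖ + log (1 + exp (C * ‖β‖))) ?_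
  filter_upwards [hXC, hY01] with ω hω hyω
  rw [Real.norm_eq_abs]
  exact abs_logisticLoss_le hyω (by simpa only [Real.norm_eq_abs] using (X ω).le_of_opNorm_le hω β)

lemma integrable_sigmoid_sub_smul (hX : AEStronglyMeasurable X μ)
    (hY : AEStronglyMeasurable Y μ) (hXC : ∀ᵐ ω ∂μ, ‖X ω‖ ≤ C)
    (hY01 : ∀ᵐ ω ∂μ, Y ω ∈ Set.Icc 0 1) (β : E) :
    Integrable (fun ω => (sigmoid (X ω β) - Y ω) • X ω) μ := by
  refine .of_bound
    (((continuous_sigmoid.comp_aestronglyMeasurable (hX.apply_continuousLinearMap β)).sub hY).smul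
      hX) C ?_
  filter_upwards [hXC, hY01] with ω hω hyω
  exact norm_sigmoid_sub_smul_le hyω hω _

lemma hasFDerivAt_logisticRisk (hX : AEStronglyMeasurable X μ) (hY : AEStronglyMeasurable Y μ)
    (hXC : ∀ᵐ ω ∂μ, ‖X ω‖ ≤ C) (hY01 : ∀ᵐ ω ∂μ, Y ω ∈ Set.Icc 0 1) (β₀ : E) :
    HasFDerivAt (logisticRisk μ X Y) (logisticRiskGrad μ X Y β₀) β₀ :=
  hasFDerivAt_integral_of_dominated_of_fderiv_le (bound := fun _ => C) Filter.univ_mem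
    (.of_forall fun β => (integrable_logisticLoss hX hY hXC hY01 β).aestronglyMeasurable)
    (integrable_logisticLoss hX hY hXC hY01 β₀)
    (integrable_sigmoid_sub_smul hX hY hXC hY01 β₀).aestronglyMeasurable
    (by filter_upwards [hXC, hY01] with ω hω hyω β _ using norm_sigmoid_sub_smul_le hyω hω _)
    (integrable_const C)
    (.of_forall fun ω β _ =>
      (hasDerivAt_logisticLoss (Y ω) (X ω β)).comp_hasFDerivAt β (X ω).hasFDerivAt)

end LogisticRisk

def prodDotL (ι κ : Type*) [Fintype ι] [Fintype κ] :
    (ι → ℝ) × (κ → ℝ) →L[ℝ] (ι → ℝ) × (κ → ℝ) →L[ℝ] ℝ :=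
  LinearMap.toContinuousLinearMap <|
    (LinearMap.toContinuousLinearMap : _ ≃ₗ[ℝ] ((ι → ℝ) × (κ → ℝ) →L[ℝ] ℝ)).toLinearMap ∘ₗ
      ((dotProductBilin ℝ ℝ).compl₁₂ (LinearMap.fst ℝ _ _) (LinearMap.fst ℝ _ _) +
        (dotProductBilin ℝ ℝ).compl₁₂ (LinearMap.snd ℝ _ _) (LinearMap.snd ℝ _ _))

lemma prodDotL_apply {ι κ : Type*} [Fintype ι] [Fintype κ] (x v : (ι → ℝ) × (κ → ℝ)) :
    prodDotL ι κ x v = x.1 ⬝ᵥ v.1 + x.2 ⬝ᵥ v.2 :=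
  rfl

lemma norm_prod_le_max_of_abs_le {ι κ : Type*} [Fintype ι] [Fintype κ] {w : ι → ℝ} {z : κ → ℝ}
    {B : ℝ} (hw : ∀ i, |w i| ≤ B) (hz : ∀ j, |z j| ≤ B) : ‖(w, z)‖ ≤ max B 0 :=
  norm_prod_le_iff.2
    ⟨(pi_norm_le_iff_of_nonneg (le_max_right _ _)).2 fun i =>
        (Real.norm_eq_abs _).trans_le ((hw i).trans (le_max_left _ _)),
      (pi_norm_le_iff_of_nonneg (le_max_right _ _)).2 fun j =>
        (Real.norm_eq_abs _).trans_le ((hz j).trans (le_max_left _ _))⟩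

lemma integral_mul_dotProduct_eq_zero {Ω ι : Type*} [MeasurableSpace Ω] {μ : Measure Ω}
    [Fintype ι] {Z : Ω → ι → ℝ} {V : Ω → ℝ} (hV : AEStronglyMeasurable V μ)
    (hind : IndepFun Z V μ) (hZint : ∀ j, Integrable (fun ω => Z ω j) μ)
    (hZ0 : ∀ j, ∫ ω, Z ω j ∂μ = 0) (c : ι → ℝ) :
    ∫ ω, V ω * (Z ω ⬝ᵥ c) ∂μ = 0 := by
  have hZc : Integrable (fun ω => Z ω ⬝ᵥ c) μ :=
    integrable_finsetSum _ fun j _ => (hZint j).mul_const (c j)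
  have hind' : IndepFun V (fun ω => Z ω ⬝ᵥ c) μ :=
    hind.symm.comp measurable_id (continuous_id.dotProduct continuous_const).measurable
  have hmean : ∫ ω, Z ω ⬝ᵥ c ∂μ = 0 := by
    simp only [dotProduct]
    rw [integral_finsetSum _ fun j _ => (hZint j).mul_const (c j)]
    simp [integral_mul_const, hZ0]
  have hfactor := hind'.integral_mul_eq_mul_integral hV hZc.aestronglyMeasurable
  simp only [Pi.mul_apply] at hfactor
  rw [hfactor, hmean, mul_zero]

lemma logisticRiskGrad_comp_inr_eq_zero {Ω ι κ : Type*} [MeasurableSpace Ω] {μ : Measure Ω}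
    [Fintype ι] [Fintype κ] {W : Ω → ι → ℝ} {Z : Ω → κ → ℝ} {Y : Ω → ℝ} (β : ι → ℝ)
    (hW : Measurable W) (hY : Measurable Y)
    (hint : Integrable (fun ω => (Real.sigmoid (prodDotL ι κ (W ω, Z ω) (β, 0)) - Y ω) •
      prodDotL ι κ (W ω, Z ω)) μ)
    (hind : IndepFun Z (fun ω => (W ω, Y ω)) μ) (hZint : ∀ j, Integrable (fun ω => Z ω j) μ)
    (hZ0 : ∀ j, ∫ ω, Z ω j ∂μ = 0) :
    (logisticRiskGrad μ (fun ω => prodDotL ι κ (W ω, Z ω)) Y (β, 0)).comp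
      (ContinuousLinearMap.inr ℝ _ _) = 0 := by
  refine ContinuousLinearMap.ext fun c => ?_
  rw [ContinuousLinearMap.comp_apply, logisticRiskGrad, ContinuousLinearMap.integral_apply hint]
  simp only [smul_apply, ContinuousLinearMap.inr_apply, prodDotL_apply, dotProduct_zero, add_zero,
    zero_add, smul_eq_mul, zero_apply]
  have hψ : Measurable fun p : (ι → ℝ) × ℝ => Real.sigmoid (p.1 ⬝ᵥ β) - p.2 :=
    (continuous_sigmoid.comp (continuous_fst.dotProduct continuous_const)).measurable.sub
      measurable_snd
  exact integral_mul_dotProduct_eq_zero (Z := Z) (hψ.comp (hW.prodMk hY)).aestronglyMeasurable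
    (hind.comp measurable_id hψ) hZint hZ0 c

theorem stmt19_general {k m : ℕ}
    {Ω : Type*} [MeasurableSpace Ω] (μ : Measure Ω) [IsProbabilityMeasure μ]
    (W : Ω → Fin k → ℝ) (Z : Ω → Fin m → ℝ) (Y0 : Ω → ℝ)
    (hWm : Measurable W) (hZm : Measurable Z) (hY0m : Measurable Y0)
    -- boundedness of the covariate vector
    (hbdd : ∃ B : ℝ, ∀ ω, (∀ i, |W ω i| ≤ B) ∧ ∀ j, |Z ω j| ≤ B)
    -- Y₀ takes values in {0,1}
    (hY01 : ∀ ω, Y0 ω = 0 ∨ Y0 ω = 1)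
    -- Z is independent of the pair (W, Y₀)
    (hindep : IndepFun Z (fun ω => (W ω, Y0 ω)) μ)
    -- E[Z] = 0
    (hZ0 : ∀ j, ∫ ω, Z ω j ∂μ = 0)
    -- the population logistic loss
    (l : (Fin k → ℝ) → (Fin m → ℝ) → ℝ)
    (hl : ∀ b c, l b c =
      ∫ ω, (-(Y0 ω) * (dot (W ω) b + dot (Z ω) c)
        + Real.log (1 + Real.exp (dot (W ω) b + dot (Z ω) c))) ∂μ)
    -- β̃ minimizes the restricted loss
    (betaTilde : Fin k → ℝ)
    (hmin : ∀ b : Fin k → ℝ, l betaTilde 0 ≤ l b 0) :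
    HasFDerivAt (fun bc : (Fin k → ℝ) × (Fin m → ℝ) => l bc.1 bc.2)
        (0 : (Fin k → ℝ) × (Fin m → ℝ) →L[ℝ] ℝ) (betaTilde, 0) ∧
      ∀ (b : Fin k → ℝ) (c : Fin m → ℝ), l betaTilde 0 ≤ l b c := by
  obtain ⟨B, hB⟩ := hbdd
  set X : Ω → (Fin k → ℝ) × (Fin m → ℝ) →L[ℝ] ℝ := fun ω => prodDotL (Fin k) (Fin m) (W ω, Z ω)
  have hXm : AEStronglyMeasurable X μ :=
    (prodDotL _ _).continuous.comp_aestronglyMeasurable (hWm.prodMk hZm).aestronglyMeasurable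
  have hXC : ∀ᵐ ω ∂μ, ‖X ω‖ ≤ ‖prodDotL (Fin k) (Fin m)‖ * max B 0 := .of_forall fun ω =>
    (prodDotL _ _).le_of_opNorm_le_of_le le_rfl (norm_prod_le_max_of_abs_le (hB ω).1 (hB ω).2)
  have hY : ∀ᵐ ω ∂μ, Y0 ω ∈ Set.Icc 0 1 :=
    .of_forall fun ω => by rcases hY01 ω with h | h <;> simp [h]
  have hloss : ∀ b c, l b c = logisticRisk μ X Y0 (b, c) := fun b c => hl b c
  have hgrad := hasFDerivAt_logisticRisk hXm hY0m.aestronglyMeasurable hXC hY (betaTilde, 0)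
  have hW : (logisticRiskGrad μ X Y0 (betaTilde, 0)).comp (ContinuousLinearMap.inl ℝ _ _) = 0 := by
    have hloc : IsLocalMin (logisticRisk μ X Y0 ∘ ContinuousLinearMap.inl ℝ _ _) betaTilde :=
      .of_forall fun b => by
        simpa only [Function.comp_apply, ContinuousLinearMap.inl_apply, hloss] using hmin b
    exact hloc.hasFDerivAt_eq_zero (hgrad.comp betaTilde
      (ContinuousLinearMap.inl ℝ (Fin k → ℝ) (Fin m → ℝ)).hasFDerivAt)
  have hZ := logisticRiskGrad_comp_inr_eq_zero betaTilde hWm hY0m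
    (integrable_sigmoid_sub_smul hXm hY0m.aestronglyMeasurable hXC hY _) hindep
    (fun j => .of_bound (hZm.eval (a := j)).aestronglyMeasurable B
      (.of_forall fun ω => by simpa only [Real.norm_eq_abs] using (hB ω).2 j)) hZ0
  have hG : logisticRiskGrad μ X Y0 (betaTilde, 0) = 0 :=
    ContinuousLinearMap.prod_ext (by rw [hW, ContinuousLinearMap.zero_comp])
      (by rw [hZ, ContinuousLinearMap.zero_comp])
  rw [hG] at hgrad
  have hglobal := (convexOn_logisticRisk (integrable_logisticLoss hXm hY0m.aestronglyMeasurable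
    hXC hY)).isMinOn_of_hasFDerivAt_eq_zero hgrad
  refine ⟨by simpa only [hloss] using hgrad, fun b c => ?_⟩
  simpa only [hloss] using isMinOn_univ_iff.1 hglobal (b, c)

/-- Supplement Section IV of Liang–Tan: in a misspecified logistic
regression with covariates `X₀ = (W, Z)` where `Z` is independent of `(W, Y₀)`,
`E[Z] = 0`, and `P(Y₀ = 1 | X₀)` depends on `W` only, if `β̃` minimizes the
restricted population logistic loss `b ↦ ℓ(b, 0)`, then the gradient of `ℓ` vanishes
at `(β̃, 0)` and, by convexity, `(β̃, 0)` is a global minimizer of `ℓ`. -/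
theorem stmt19 {k m : ℕ}
    {Ω : Type*} [MeasurableSpace Ω] (μ : Measure Ω) [IsProbabilityMeasure μ]
    (W : Ω → Fin k → ℝ) (Z : Ω → Fin m → ℝ) (Y0 : Ω → ℝ)
    (hWm : Measurable W) (hZm : Measurable Z) (hY0m : Measurable Y0)
    -- boundedness of the covariate vector
    (hbdd : ∃ B : ℝ, ∀ ω, (∀ i, |W ω i| ≤ B) ∧ ∀ j, |Z ω j| ≤ B)
    -- Y₀ takes values in {0,1}
    (hY01 : ∀ ω, Y0 ω = 0 ∨ Y0 ω = 1)
    -- Z is independent of the pair (W, Y₀)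
    (hindep : IndepFun Z (fun ω => (W ω, Y0 ω)) μ)
    -- E[Z] = 0
    (hZ0 : ∀ j, ∫ ω, Z ω j ∂μ = 0)
    -- P(Y₀ = 1 | X₀) is a function of W only (via the conditional expectation of Y₀)
    (hcond : ∃ h : (Fin k → ℝ) → ℝ, Measurable h ∧
      (μ[Y0 | MeasurableSpace.comap (fun ω => (W ω, Z ω)) inferInstance])
        =ᵐ[μ] fun ω => h (W ω))
    -- the population logistic loss
    (l : (Fin k → ℝ) → (Fin m → ℝ) → ℝ)
    (hl : ∀ b c, l b c =
      ∫ ω, (-(Y0 ω) * (dot (W ω) b + dot (Z ω) c)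
        + Real.log (1 + Real.exp (dot (W ω) b + dot (Z ω) c))) ∂μ)
    -- β̃ minimizes the restricted loss
    (betaTilde : Fin k → ℝ)
    (hmin : ∀ b : Fin k → ℝ, l betaTilde 0 ≤ l b 0) :
    HasFDerivAt (fun bc : (Fin k → ℝ) × (Fin m → ℝ) => l bc.1 bc.2)
        (0 : (Fin k → ℝ) × (Fin m → ℝ) →L[ℝ] ℝ) (betaTilde, 0) ∧
      ∀ (b : Fin k → ℝ) (c : Fin m → ℝ), l betaTilde 0 ≤ l b c :=
  stmt19_general μ W Z Y0 hWm hZm hY0m hbdd hY01 hindep hZ0 l hl betaTilde hmin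
end
end
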